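/- (Squared norm of the k-Mersenne-Lucas octonion) For every natural number n, ∑_{r=0}^{7} m_{k,n+r}² = λ₁^{2n}·∑_{r=0}^{7} λ₁^{2r} + λ₂^{2n}·∑_{r=0}^{7} λ₂^{2r} + 255·2^{n+1}, where λ₁, λ₂ are the roots of λ² − 3kλ + 2 = 0. -/

import Mathlib

noncomputable def m (k : ℝ) : ℕ → ℝ
  | 0 => 2
  | 1 => 3*k
  | (n+2) => 3*k * m k (n+1) - 2 * m k n

/-! λ₁ and λ₂ are the roots of λ² − 3kλ + 2, so the Binet formula m_{k,n} = λ₁ⁿ + λ₂ⁿ holds.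
Squaring gives m_{k,n}² = λ₁^{2n} + λ₂^{2n} + 2(λ₁λ₂)ⁿ = λ₁^{2n} + λ₂^{2n} + 2ⁿ⁺¹,
and summing the last term over eight consecutive indices is a geometric sum
equal to 255 · 2ⁿ⁺¹. -/

theorem m_eq_pow_add_pow {k a b : ℝ} (hsum : a + b = 3 * k) (hprod : a * b = 2) :
    ∀ n, m k n = a ^ n + b ^ n
  | 0 => by norm_num [m]
  | 1 => by simp [m, hsum]
  | n + 2 => by
    rw [m, m_eq_pow_add_pow hsum hprod (n + 1), m_eq_pow_add_pow hsum hprod n, ← hsum, ← hprod]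
    ring

theorem sq_pow_add_pow {R : Type*} [CommSemiring R] (a b : R) (n : ℕ) :
    (a ^ n + b ^ n) ^ 2 = a ^ (2 * n) + b ^ (2 * n) + 2 * (a * b) ^ n := by
  ring

theorem sum_range_two_pow_add (n N : ℕ) :
    ∑ r ∈ Finset.range N, (2 : ℝ) ^ (n + r) = (2 ^ N - 1) * 2 ^ n := by
  simp only [pow_add, ← Finset.mul_sum, geom_sum_eq (by norm_num : (2 : ℝ) ≠ 1)]
  ring

theorem kMersenneLucas_oct_norm (k : ℝ) (hk : 9*k^2 > 8)
    (lam1 lam2 : ℝ)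
    (h1 : lam1 = (3*k + Real.sqrt (9*k^2 - 8))/2)
    (h2 : lam2 = (3*k - Real.sqrt (9*k^2 - 8))/2)
    (n : ℕ) :
    ∑ r ∈ Finset.range 8, (m k (n+r))^2
      = lam1^(2*n) * ∑ r ∈ Finset.range 8, lam1^(2*r)
        + lam2^(2*n) * ∑ r ∈ Finset.range 8, lam2^(2*r)
        + 255 * 2^(n+1) := by
  have hsqrt : Real.sqrt (9*k^2 - 8) ^ 2 = 9*k^2 - 8 := Real.sq_sqrt (by linarith)
  have hsum : lam1 + lam2 = 3*k := by rw [h1, h2]; ring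
  have hprod : lam1 * lam2 = 2 := by rw [h1, h2]; linear_combination -hsqrt / 4
  have hterm (r : ℕ) : m k (n+r) ^ 2
      = lam1^(2*n) * lam1^(2*r) + lam2^(2*n) * lam2^(2*r) + 2 * 2^(n+r) := by
    rw [m_eq_pow_add_pow hsum hprod, sq_pow_add_pow, hprod, ← pow_add, ← pow_add, mul_add]
  rw [Finset.sum_congr rfl fun r _ => hterm r, Finset.sum_add_distrib, Finset.sum_add_distrib,
    ← Finset.mul_sum, ← Finset.mul_sum, ← Finset.mul_sum, sum_range_two_pow_add]
  ring
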